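/- (Conversion to divergence form.) Let α ∈ ℝ, q > d, let 𝒮 ⊂ Λ be a lattice basis, and let f : Λ → ℝ^N satisfy |f(ℓ)| ≤ C_f⟨ℓ⟩^{−q}(log⟨ℓ⟩)^α for all ℓ ∈ Λ and ∑_{ℓ∈Λ} f(ℓ) = 0. Then there exist g : Λ → (ℝ^N)^𝒮 and a constant C independent of f and ℓ such that f(ℓ) = ∑_{σ∈𝒮}(g_σ(ℓ−σ) − g_σ(ℓ)) for all ℓ ∈ Λ, and |g(ℓ)| ≤ C·C_f⟨ℓ⟩^{−q+1}(log⟨ℓ⟩)^α for all ℓ ∈ Λ. -/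

import Mathlib

noncomputable section

open scoped BigOperators
open MeasureTheory Filter Topology

namespace Defect

abbrev Vec (n : ℕ) : Type := Fin n → ℝ

/-- Euclidean norm of a vector in `ℝ^n`. -/
def enorm {n : ℕ} (v : Vec n) : ℝ := Real.sqrt (∑ i, (v i) ^ 2)

/-- `⟨x⟩ := |x| + 2`. -/
def ang {n : ℕ} (v : Vec n) : ℝ := enorm v + 2

def dotV {n : ℕ} (x y : Vec n) : ℝ := ∑ i, x i * y i

/-- Matrix-vector product for a plain `Fin N → Fin N → ℝ` matrix. -/
def mulV {N : ℕ} (M : Fin N → Fin N → ℝ) (v : Vec N) : Vec N := fun i => ∑ j, M i j * v j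

/-- Euclidean (Frobenius) norm of an `N × N` array. -/
def mnorm {N : ℕ} (M : Fin N → Fin N → ℝ) : ℝ := Real.sqrt (∑ i, ∑ j, (M i j) ^ 2)

/-- The lattice point `A z` for `z ∈ ℤ^d`. -/
def latticePt (d : ℕ) (A : Matrix (Fin d) (Fin d) ℝ) (z : Fin d → ℤ) : Vec d :=
  fun i => ∑ j, A i j * (z j : ℝ)

/-- The Bravais lattice `Λ = A ℤ^d`. -/
def Lattice (d : ℕ) (A : Matrix (Fin d) (Fin d) ℝ) : Set (Vec d) :=
  Set.range (latticePt d A)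

/-- First-order finite difference `D_ρ u (ℓ) = u(ℓ+ρ) - u(ℓ)`. -/
def D1 {d : ℕ} {M : Type} [AddCommGroup M] (ρ : Vec d) (u : Vec d → M) (ℓ : Vec d) : M :=
  u (ℓ + ρ) - u ℓ

/-- Iterated finite difference `D_{ρ₁} ⋯ D_{ρ_j} u (ℓ)` (closed form). -/
def Dmulti {d : ℕ} {M : Type} [AddCommGroup M] [Module ℝ M] {j : ℕ}
    (ρs : Fin j → Vec d) (u : Vec d → M) (ℓ : Vec d) : M :=
  ∑ S : Finset (Fin j), ((-1 : ℝ) ^ (j - S.card)) • u (ℓ + ∑ i ∈ S, ρs i)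

/-- `|Du(ℓ)|²`, the squared Euclidean norm of the stencil of first differences. -/
def Dnorm1Sq {d N : ℕ} (R : Finset (Vec d)) (u : Vec d → Vec N) (ℓ : Vec d) : ℝ :=
  ∑ ρ ∈ R, (enorm (D1 ρ u ℓ)) ^ 2

/-- `|D^j u(ℓ)|`, the Euclidean norm of the array `(D_{ρ⃗} u(ℓ))_{ρ⃗ ∈ R^j}`. -/
def DnormJ {d N : ℕ} (R : Finset (Vec d)) (j : ℕ) (u : Vec d → Vec N) (ℓ : Vec d) : ℝ :=
  Real.sqrt (∑ ρs : Fin j → {x // x ∈ R},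
    (enorm (Dmulti (fun i => (ρs i : Vec d)) u ℓ)) ^ 2)

/-- The linearized lattice operator
`H[u](ℓ) = ∑_{σ,ρ∈R} (C_{σρ} D_ρ u(ℓ-σ) - C_{σρ} D_ρ u(ℓ))`. -/
def Hop (d N : ℕ) (R : Finset (Vec d)) (C : Vec d → Vec d → Fin N → Fin N → ℝ)
    (u : Vec d → Vec N) (ℓ : Vec d) : Vec N :=
  ∑ σ ∈ R, ∑ ρ ∈ R, (mulV (C σ ρ) (D1 ρ u (ℓ - σ)) - mulV (C σ ρ) (D1 ρ u ℓ))

/-- `u ∈ 𝓗¹`. -/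
def InH1 {d N : ℕ} (A : Matrix (Fin d) (Fin d) ℝ) (R : Finset (Vec d))
    (u : Vec d → Vec N) : Prop :=
  Summable fun z : Fin d → ℤ => Dnorm1Sq R u (latticePt d A z)

/-- `u ∈ 𝓗ᶜ` : the stencil `Du` has bounded support on the lattice. -/
def InHc {d N : ℕ} (A : Matrix (Fin d) (Fin d) ℝ) (R : Finset (Vec d))
    (u : Vec d → Vec N) : Prop :=
  ∃ rad : ℝ, ∀ z : Fin d → ℤ, rad ≤ enorm (latticePt d A z) →
    ∀ ρ ∈ R, D1 ρ u (latticePt d A z) = 0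

/-- Stability of the lattice operator `H`. -/
def IsStable (d N : ℕ) (A : Matrix (Fin d) (Fin d) ℝ) (R : Finset (Vec d))
    (C : Vec d → Vec d → Fin N → Fin N → ℝ) : Prop :=
  ∃ c₀ : ℝ, 0 < c₀ ∧ ∀ u : Vec d → Vec N, InHc A R u →
    c₀ * (∑' z : Fin d → ℤ, Dnorm1Sq R u (latticePt d A z)) ≤
      ∑' z : Fin d → ℤ, ∑ σ ∈ R, ∑ ρ ∈ R,
        dotV (D1 σ u (latticePt d A z)) (mulV (C σ ρ) (D1 ρ u (latticePt d A z)))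

/-- `k`-th column of a matrix-valued function. -/
def col {d N : ℕ} (G : Vec d → Fin N → Fin N → ℝ) (k : Fin N) : Vec d → Vec N :=
  fun x i => G x i k

/-- `|D^j 𝒢(ℓ)|` for matrix-valued `𝒢`. -/
def DnormJmat {d N : ℕ} (R : Finset (Vec d)) (j : ℕ)
    (G : Vec d → Fin N → Fin N → ℝ) (ℓ : Vec d) : ℝ :=
  Real.sqrt (∑ k : Fin N, (DnormJ R j (col G k) ℓ) ^ 2)

/-- `𝒢` is a lattice Green's function for `H`. -/
def IsLatticeGreen (d N : ℕ) (A : Matrix (Fin d) (Fin d) ℝ) (R : Finset (Vec d))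
    (C : Vec d → Vec d → Fin N → Fin N → ℝ) (G : Vec d → Fin N → Fin N → ℝ) : Prop :=
  (∀ (k : Fin N) (z : Fin d → ℤ),
      Hop d N R C (col G k) (latticePt d A z) =
        if latticePt d A z = 0 then Pi.single k 1 else 0) ∧
  (∀ j : ℕ, 1 ≤ j → ∃ cj : ℝ, ∀ z : Fin d → ℤ,
      DnormJmat R j G (latticePt d A z) ≤
        cj * ang (latticePt d A z) ^ ((2 : ℝ) - d - j))

/-- A symmetric array `b ∈ (ℝ^{Fin d})^{⊙ i}`. -/
def SymArr {d i : ℕ} (b : (Fin i → Fin d) → ℝ) : Prop :=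
  ∀ (π : Equiv.Perm (Fin i)) (σv : Fin i → Fin d), b (σv ∘ π) = b σv

/-- `b : D_𝒮^i f`, a multipole term built from the basis `s`. -/
def multipole (d N : ℕ) (s : Fin d → Vec d) (i : ℕ) (b : (Fin i → Fin d) → ℝ)
    (f : Vec d → Vec N) : Vec d → Vec N :=
  fun ℓ => ∑ σv : Fin i → Fin d, b σv • Dmulti (fun m => s (σv m)) f ℓ

/-- Iterated partial derivative `∂_{j₁} ⋯ ∂_{j_i} f (x)`. -/
def pderivMulti {d : ℕ} (i : ℕ) (js : Fin i → Fin d) (f : Vec d → ℝ) (x : Vec d) : ℝ :=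
  iteratedFDeriv ℝ i f x (fun m => Pi.single (js m) (1 : ℝ))

/-- `a : ∇^i f (x)` for a tensor `a ∈ (ℝ^d)^{⊗ i}`. -/
def aContract {d : ℕ} (i : ℕ) (a : (Fin i → Fin d) → ℝ) (f : Vec d → ℝ) (x : Vec d) : ℝ :=
  ∑ js : Fin i → Fin d, a js * pderivMulti i js f x

/-- Elementary tensor `σ⃗^⊗` as an array. -/
def tensorPow {d k : ℕ} (σs : Fin k → Vec d) : (Fin k → Fin d) → ℝ :=
  fun js => ∏ m, σs m (js m)

/-- Symmetric tensor product `σ⃗^⊙`. -/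
def symTensor {d k : ℕ} (σs : Fin k → Vec d) : (Fin k → Fin d) → ℝ :=
  fun js => ((k.factorial : ℝ))⁻¹ * ∑ π : Equiv.Perm (Fin k), tensorPow (σs ∘ π) js

/-- A symmetric tensor (array invariant under index permutations). -/
def SymTensor {d k : ℕ} (T : (Fin k → Fin d) → ℝ) : Prop :=
  ∀ (π : Equiv.Perm (Fin k)) (js : Fin k → Fin d), T (js ∘ π) = T js

/-- `∂V/∂g_ρ (gs)` as a vector in `ℝ^N`. -/
def gradV {d N : ℕ} (R : Finset (Vec d)) (V : ({x // x ∈ R} → Vec N) → ℝ)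
    (ρ : {x // x ∈ R}) (gs : {x // x ∈ R} → Vec N) : Vec N :=
  fun i => fderiv ℝ V gs (Pi.single ρ (Pi.single i 1))

/-- The finite-difference stencil `Du(ℓ) = (D_ρ u(ℓ))_{ρ ∈ R}`. -/
def Dstencil {d N : ℕ} (R : Finset (Vec d)) (u : Vec d → Vec N) (ℓ : Vec d) :
    {x // x ∈ R} → Vec N :=
  fun ρ => D1 (ρ : Vec d) u ℓ

/-- `C_{σρ} = ∂²V/∂g_σ ∂g_ρ (0)`. -/
def CofV {d N : ℕ} (R : Finset (Vec d)) (V : ({x // x ∈ R} → Vec N) → ℝ)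
    (σ ρ : Vec d) (i j : Fin N) : ℝ :=
  if hσ : σ ∈ R then
    if hρ : ρ ∈ R then
      iteratedFDeriv ℝ 2 V 0
        ![Pi.single ⟨σ, hσ⟩ (Pi.single i 1), Pi.single ⟨ρ, hρ⟩ (Pi.single j 1)]
    else 0
  else 0

/-- Summand of the first variation `δE(u)[v]` at a site. -/
def deltaEsite {d N : ℕ} (R : Finset (Vec d)) (V : ({x // x ∈ R} → Vec N) → ℝ)
    (u v : Vec d → Vec N) (ℓ : Vec d) : ℝ :=
  ∑ ρ ∈ R.attach, dotV (gradV R V ρ (Dstencil R u ℓ)) (D1 (ρ : Vec d) v ℓ)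

/-- The pointwise atomistic force `δE(u)(ℓ)`. -/
def deltaEpt {d N : ℕ} (R : Finset (Vec d)) (V : ({x // x ∈ R} → Vec N) → ℝ)
    (u : Vec d → Vec N) (ℓ : Vec d) : Vec N :=
  ∑ ρ ∈ R.attach,
    (gradV R V ρ (Dstencil R u (ℓ - (ρ : Vec d))) - gradV R V ρ (Dstencil R u ℓ))

/-- Point symmetry of the site potential. -/
def PointSym {d N : ℕ} (R : Finset (Vec d)) (hRsym : ∀ ρ ∈ R, -ρ ∈ R)
    (V : ({x // x ∈ R} → Vec N) → ℝ) : Prop :=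
  ∀ gs : {x // x ∈ R} → Vec N,
    V (fun ρ => -(gs ⟨-(ρ : Vec d), hRsym _ ρ.2⟩)) = V gs

/-- The Cauchy–Born elasticity tensor `ℂ_{iajb}`. -/
def CB {d N : ℕ} (A : Matrix (Fin d) (Fin d) ℝ) (R : Finset (Vec d))
    (C : Vec d → Vec d → Fin N → Fin N → ℝ)
    (i : Fin N) (a : Fin d) (j : Fin N) (b : Fin d) : ℝ :=
  (|A.det|)⁻¹ * ∑ ρ ∈ R, ∑ σ ∈ R, C ρ σ i j * ρ a * σ b

/-!
Since `∑ f = 0`, `f = ∑ₘ f(m) (δₘ - δ₀)`, and `δₘ - δ₀` is the divergence of a unit flow `Wₘ`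
from `m` to `0` along lattice edges; then `g = ∑ₘ f(m) Wₘ`. In the coordinates of the basis the
lattice is `ℤ^d`, and `⟨ℓ⟩` is comparable to the sup norm of the coordinates. The flow `Wₘ` follows
the dyadic chain `m, m/2, m/4, …, 0`, going from one point to the next along a staircase that
corrects one coordinate after the other. The edge at `n` is then used at level `k` only by the
flows from `≲ 2^{kd} ⟨n⟩` points `m`, all with `⟨m⟩ ≈ 2^k ⟨n⟩`, so that
`|g(n)| ≲ ∑ₖ 2^{kd} ⟨n⟩ (2^k ⟨n⟩)^{-q} (log (2^k ⟨n⟩))^α ≲ ⟨n⟩^{1-q} (log ⟨n⟩)^α` because `q > d`.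
-/

section LogWeight

lemma rpow_le_abs_mul_rpow {x y c : ℝ} (p : ℝ) (hx : 0 < x) (hy : 0 < y) (hxy : x ≤ c * y)
    (hyx : y ≤ c * x) : x ^ p ≤ c ^ |p| * y ^ p := by
  have hc : 0 < c := pos_of_mul_pos_left (hy.trans_le hyx) hx.le
  rcases le_or_gt 0 p with hp | hp
  · rw [abs_of_nonneg hp, ← Real.mul_rpow hc.le hy.le]
    exact Real.rpow_le_rpow hx.le hxy hp
  · calc x ^ p ≤ (y / c) ^ p :=
          Real.rpow_le_rpow_of_nonpos (by positivity) ((div_le_iff₀' hc).2 hyx) hp.le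
      _ = c ^ |p| * y ^ p := by
        rw [abs_of_neg hp, Real.div_rpow hy.le hc.le, Real.rpow_neg hc.le, div_eq_inv_mul]

lemma log_le_mul_log {a b K : ℝ} (ha : 0 < a) (hb : 2 ≤ b) (hK : 1 ≤ K) (hab : a ≤ K * b) :
    Real.log a ≤ (1 + Real.logb 2 K) * Real.log b := by
  have hlog2 : 0 < Real.log 2 := Real.log_pos one_lt_two
  calc Real.log a ≤ Real.log K + Real.log b := by
        rw [← Real.log_mul (by positivity) (by positivity)]
        exact Real.log_le_log ha hab
    _ ≤ Real.log K / Real.log 2 * Real.log b + Real.log b := by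
        gcongr
        rw [div_mul_eq_mul_div, le_div_iff₀ hlog2]
        exact mul_le_mul_of_nonneg_left (Real.log_le_log two_pos hb) (Real.log_nonneg hK)
    _ = (1 + Real.logb 2 K) * Real.log b := by rw [Real.logb]; ring

def logWeight (p α x : ℝ) : ℝ := x ^ p * Real.log x ^ α

lemma logWeight_pos {x : ℝ} (p α : ℝ) (hx : 1 < x) : 0 < logWeight p α x :=
  mul_pos (Real.rpow_pos_of_pos (by linarith) _) (Real.rpow_pos_of_pos (Real.log_pos hx) _)

lemma logWeight_add_one {x : ℝ} (p α : ℝ) (hx : 0 < x) :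
    logWeight (p + 1) α x = x * logWeight p α x := by
  rw [logWeight, logWeight, Real.rpow_add_one hx.ne']; ring

lemma logWeight_le_of_le_mul {a b K : ℝ} (p α : ℝ) (ha : 2 ≤ a) (hb : 2 ≤ b) (hK : 1 ≤ K)
    (hab : a ≤ K * b) (hba : b ≤ K * a) :
    logWeight p α a ≤ K ^ |p| * (1 + Real.logb 2 K) ^ |α| * logWeight p α b := by
  have hlog : Real.log a ^ α ≤ (1 + Real.logb 2 K) ^ |α| * Real.log b ^ α :=
    rpow_le_abs_mul_rpow α (Real.log_pos (by linarith)) (Real.log_pos (by linarith))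
      (log_le_mul_log (by linarith) hb hK hab) (log_le_mul_log (by linarith) ha hK hba)
  calc logWeight p α a ≤ (K ^ |p| * b ^ p) * ((1 + Real.logb 2 K) ^ |α| * Real.log b ^ α) :=
        mul_le_mul (rpow_le_abs_mul_rpow p (by linarith) (by linarith) hab hba) hlog
          (Real.rpow_nonneg (Real.log_nonneg (by linarith)) _) (by positivity)
    _ = _ := by rw [logWeight]; ring

lemma logWeight_two_pow_mul_le {x : ℝ} (p α : ℝ) (hx : 2 ≤ x) (k : ℕ) :
    logWeight p α (2 ^ k * x) ≤ ((2 : ℝ) ^ p) ^ k * ((k : ℝ) + 1) ^ |α| * logWeight p α x := by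
  have hk : (1 : ℝ) ≤ 2 ^ k := one_le_pow₀ one_le_two
  have hlogx : 0 < Real.log x := Real.log_pos (by linarith)
  have hle : Real.log x ≤ Real.log (2 ^ k * x) :=
    Real.log_le_log (by linarith) (le_mul_of_one_le_left (by linarith) hk)
  have hup : Real.log (2 ^ k * x) ≤ ((k : ℝ) + 1) * Real.log x := by
    have := log_le_mul_log (a := 2 ^ k * x) (by positivity) hx hk le_rfl
    rwa [Real.logb_pow, Real.logb_self_eq_one one_lt_two, mul_one, add_comm] at this
  have hlog : Real.log (2 ^ k * x) ^ α ≤ ((k : ℝ) + 1) ^ |α| * Real.log x ^ α :=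
    rpow_le_abs_mul_rpow α (hlogx.trans_le hle) hlogx hup <| hle.trans <|
      le_mul_of_one_le_left (hlogx.le.trans hle) (by linarith [k.cast_nonneg (α := ℝ)])
  calc logWeight p α (2 ^ k * x)
      = ((2 : ℝ) ^ p) ^ k * x ^ p * Real.log (2 ^ k * x) ^ α := by
        rw [logWeight, Real.mul_rpow (by positivity) (by linarith), Real.rpow_pow_comm two_pos.le]
    _ ≤ ((2 : ℝ) ^ p) ^ k * x ^ p * (((k : ℝ) + 1) ^ |α| * Real.log x ^ α) := by gcongr
    _ = _ := by rw [logWeight]; ring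

lemma summable_rpow_mul_geometric {r : ℝ} (a : ℝ) (hr0 : 0 < r) (hr1 : r < 1) :
    Summable fun k : ℕ => ((k : ℝ) + 1) ^ a * r ^ k := by
  set M := ⌈a⌉₊
  have hgeom : Summable fun k : ℕ => (k : ℝ) ^ M * r ^ k :=
    summable_pow_mul_geometric_of_norm_lt_one M (by rwa [Real.norm_of_nonneg hr0.le])
  have hshift : Summable fun k : ℕ => ((k : ℝ) + 1) ^ M * r ^ k := by
    refine (((summable_nat_add_iff 1).2 hgeom).mul_left r⁻¹).congr fun k => ?_
    rw [pow_succ]; push_cast; field_simp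
  refine hshift.of_nonneg_of_le (fun k => by positivity) fun k => ?_
  gcongr
  rw [← Real.rpow_natCast]
  exact Real.rpow_le_rpow_of_exponent_le (by linarith [k.cast_nonneg (α := ℝ)]) (Nat.le_ceil a)

end LogWeight

section LatticeFlow

open Finset

variable {d : ℕ}

/-- `F n i` is the flux through the edge from `n` to `n + eᵢ`. -/
def latticeDiv : ((Fin d → ℤ) → Fin d → ℤ) →+ ((Fin d → ℤ) → ℤ) where
  toFun F n := ∑ i, (F (n - Pi.single i 1) i - F n i)
  map_zero' := by ext; simp
  map_add' F G := by ext; simp [Finset.sum_add_distrib]; ring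

lemma latticeDiv_apply (F : (Fin d → ℤ) → Fin d → ℤ) (n : Fin d → ℤ) :
    latticeDiv F n = ∑ i, (F (n - Pi.single i 1) i - F n i) := rfl

def segmentFlow (p : Fin d → ℤ) (i : Fin d) (t : ℤ) : (Fin d → ℤ) → Fin d → ℤ :=
  fun n j => if j = i ∧ ∀ j' ≠ i, n j' = p j' then
    (if t ≤ n i then 1 else 0) - (if p i ≤ n i then 1 else 0) else 0

lemma eq_iff_apply_eq_of_forall_ne {n p : Fin d → ℤ} {i : Fin d} (h : ∀ j ≠ i, n j = p j) :
    n = p ↔ n i = p i := by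
  refine ⟨fun h' => h' ▸ rfl, fun hi => funext fun j => ?_⟩
  by_cases hj : j = i
  · exact hj ▸ hi
  · exact h j hj

lemma latticeDiv_segmentFlow (p : Fin d → ℤ) (i : Fin d) (t : ℤ) (n : Fin d → ℤ) :
    latticeDiv (segmentFlow p i t) n =
      (if n = p then 1 else 0) - (if n = Function.update p i t then 1 else 0) := by
  rw [latticeDiv_apply, Finset.sum_eq_single i (fun j _ hj => by simp [segmentFlow, hj]) (by simp)]
  have hagree : (∀ j' ≠ i, (n - Pi.single i 1 : Fin d → ℤ) j' = p j') ↔ ∀ j' ≠ i, n j' = p j' :=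
    forall₂_congr fun j' hj' => by simp [Pi.single_eq_of_ne hj']
  simp only [segmentFlow, true_and]
  simp only [hagree]
  by_cases h : ∀ j' ≠ i, n j' = p j'
  · have hu : ∀ j' ≠ i, n j' = Function.update p i t j' := fun j' hj' => by
      rw [Function.update_of_ne hj']; exact h j' hj'
    simp only [if_pos h, eq_iff_apply_eq_of_forall_ne h, eq_iff_apply_eq_of_forall_ne hu,
      Function.update_self, Pi.sub_apply, Pi.single_eq_same]
    split_ifs <;> omega
  · have hp : n ≠ p := fun e => h fun j' _ => e ▸ rfl
    have hu : n ≠ Function.update p i t := fun e => h fun j' hj' => by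
      rw [e, Function.update_of_ne hj']
    simp [h, hp, hu]

lemma segmentFlow_apply_ne_zero {p n : Fin d → ℤ} {i j : Fin d} {t : ℤ}
    (h : segmentFlow p i t n j ≠ 0) :
    j = i ∧ (∀ j' ≠ i, n j' = p j') ∧ (t ≤ n i ∧ n i < p i ∨ p i ≤ n i ∧ n i < t) := by
  simp only [segmentFlow] at h
  split_ifs at h with hc <;> first | exact absurd rfl h | exact ⟨hc.1, hc.2, by omega⟩

lemma natAbs_segmentFlow_le (p : Fin d → ℤ) (i : Fin d) (t : ℤ) (n : Fin d → ℤ) (j : Fin d) :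
    (segmentFlow p i t n j).natAbs ≤ 1 := by
  simp only [segmentFlow]
  split_ifs <;> simp

def corner (a b : Fin d → ℤ) (K : ℕ) : Fin d → ℤ := fun j => if (j : ℕ) < K then b j else a j

lemma corner_zero (a b : Fin d → ℤ) : corner a b 0 = a := by
  ext j; simp [corner]

lemma corner_dim (a b : Fin d → ℤ) : corner a b d = b := by
  ext j; simp [corner]

lemma update_corner (a b : Fin d → ℤ) (K : Fin d) :
    Function.update (corner a b K) K (b K) = corner a b (K + 1) := by
  ext j
  rcases lt_trichotomy j K with h | rfl | h
  · simp [corner, Function.update_of_ne h.ne, h, Nat.lt_succ_of_lt (Fin.lt_def.1 h)]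
  · simp [corner]
  · have h' : ¬ (j : ℕ) < K + 1 := by have := Fin.lt_def.1 h; omega
    simp [corner, Function.update_of_ne h.ne', h', not_lt.2 h.le]

def staircase (a b : Fin d → ℤ) : (Fin d → ℤ) → Fin d → ℤ :=
  ∑ K : Fin d, segmentFlow (corner a b K) K (b K)

lemma latticeDiv_staircase (a b n : Fin d → ℤ) :
    latticeDiv (staircase a b) n = (if n = a then 1 else 0) - (if n = b then 1 else 0) := by
  simp only [staircase, map_sum, Finset.sum_apply, latticeDiv_segmentFlow, update_corner]
  rw [Fin.sum_univ_eq_sum_range (fun K => (if n = corner a b K then (1 : ℤ) else 0) -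
    (if n = corner a b (K + 1) then 1 else 0)), Finset.sum_range_sub', corner_zero, corner_dim]

lemma staircase_apply (a b n : Fin d → ℤ) (i : Fin d) :
    staircase a b n i = segmentFlow (corner a b i) i (b i) n i := by
  simp only [staircase, Finset.sum_apply]
  refine Finset.sum_eq_single i (fun K _ hK => ?_) (by simp)
  by_contra h
  exact hK (segmentFlow_apply_ne_zero h).1.symm

lemma abs_staircase_apply_le_one (a b n : Fin d → ℤ) (i : Fin d) :
    |(staircase a b n i : ℝ)| ≤ 1 := by
  rw [← Int.cast_abs, ← Nat.cast_natAbs, staircase_apply]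
  exact_mod_cast natAbs_segmentFlow_le _ _ _ _ _

lemma natAbs_tdiv_two_pow (x : ℤ) (k : ℕ) : (x.tdiv (2 ^ k)).natAbs = x.natAbs / 2 ^ k := by
  rw [Int.natAbs_tdiv, Int.natAbs_pow]; rfl

lemma two_pow_mul_natAbs_tdiv_le (x : ℤ) (k : ℕ) :
    2 ^ k * (x.tdiv (2 ^ k)).natAbs ≤ x.natAbs := by
  rw [natAbs_tdiv_two_pow]; exact Nat.mul_div_le _ _

lemma natAbs_lt_two_pow_mul_succ (x : ℤ) (k : ℕ) :
    x.natAbs < 2 ^ k * ((x.tdiv (2 ^ k)).natAbs + 1) := by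
  rw [natAbs_tdiv_two_pow]; exact Nat.lt_mul_div_succ _ (by positivity)

lemma natAbs_sub_two_pow_mul_tdiv_lt (x : ℤ) (k : ℕ) :
    (x - 2 ^ k * x.tdiv (2 ^ k)).natAbs < 2 ^ k := by
  rw [← Int.tmod_def, Int.natAbs_tmod, Int.natAbs_pow]
  exact Nat.mod_lt _ (by positivity)

lemma tdiv_two_pow_sign (x : ℤ) (k : ℕ) :
    (0 ≤ x → 0 ≤ x.tdiv (2 ^ k)) ∧ (x ≤ 0 → x.tdiv (2 ^ k) ≤ 0) := by
  refine ⟨fun hx => Int.tdiv_nonneg hx (by positivity), fun hx => ?_⟩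
  have := Int.tdiv_nonneg (neg_nonneg.2 hx) (by positivity : (0 : ℤ) ≤ 2 ^ k)
  rw [Int.neg_tdiv] at this
  omega

/-- Division is truncated toward `0`, so that the chain `m, m/2, m/4, …` ends at `0`. -/
def dyadicLevel (k : ℕ) (m : Fin d → ℤ) : Fin d → ℤ := fun j => (m j).tdiv (2 ^ k)

def depth (m : Fin d → ℤ) : ℕ := univ.sup fun j => (m j).natAbs

lemma natAbs_le_depth (m : Fin d → ℤ) (j : Fin d) : (m j).natAbs ≤ depth m :=
  Finset.le_sup (f := fun j => (m j).natAbs) (mem_univ j)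

lemma dyadicLevel_zero (m : Fin d → ℤ) : dyadicLevel 0 m = m := by
  ext j; simp [dyadicLevel]

lemma dyadicLevel_depth (m : Fin d → ℤ) : dyadicLevel (depth m) m = 0 := by
  ext j
  rw [Pi.zero_apply, ← Int.natAbs_eq_zero, dyadicLevel, natAbs_tdiv_two_pow]
  exact Nat.div_eq_of_lt ((natAbs_le_depth m j).trans_lt Nat.lt_two_pow_self)

def dyadicFlow (m : Fin d → ℤ) : (Fin d → ℤ) → Fin d → ℤ :=
  ∑ k ∈ range (depth m), staircase (dyadicLevel k m) (dyadicLevel (k + 1) m)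

lemma latticeDiv_dyadicFlow (m n : Fin d → ℤ) :
    latticeDiv (dyadicFlow m) n = (if n = m then 1 else 0) - (if n = 0 then 1 else 0) := by
  simp only [dyadicFlow, map_sum, Finset.sum_apply, latticeDiv_staircase]
  rw [Finset.sum_range_sub' (fun k => if n = dyadicLevel k m then (1 : ℤ) else 0),
    dyadicLevel_zero, dyadicLevel_depth]

lemma abs_dyadicFlow_le (m n : Fin d → ℤ) (i : Fin d) {K : ℕ} (hK : depth m ≤ K) :
    |(dyadicFlow m n i : ℝ)| ≤
      ∑ k ∈ range K, |(staircase (dyadicLevel k m) (dyadicLevel (k + 1) m) n i : ℝ)| := by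
  simp only [dyadicFlow, Finset.sum_apply, Int.cast_sum]
  exact (Finset.abs_sum_le_sum_abs _ _).trans <| Finset.sum_le_sum_of_subset_of_nonneg
    (Finset.range_subset_range.2 hK) fun _ _ _ => abs_nonneg _

end LatticeFlow

section DyadicFlowBound

open Finset

variable {d : ℕ}

lemma staircase_dyadicLevel_ne_zero {k : ℕ} {m n : Fin d → ℤ} {i : Fin d}
    (h : staircase (dyadicLevel k m) (dyadicLevel (k + 1) m) n i ≠ 0) :
    (∀ j < i, n j = dyadicLevel (k + 1) m j) ∧ (∀ j, i < j → n j = dyadicLevel k m j) ∧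
      (dyadicLevel (k + 1) m i).natAbs ≤ (n i).natAbs ∧
      (n i).natAbs ≤ (dyadicLevel k m i).natAbs ∧ dyadicLevel k m i ≠ 0 := by
  rw [staircase_apply] at h
  obtain ⟨-, hoff, hbetween⟩ := segmentFlow_apply_ne_zero h
  refine ⟨fun j hj => (hoff j hj.ne).trans (by simp [corner, hj]),
    fun j hj => (hoff j hj.ne').trans (by simp [corner, not_lt.2 hj.le]), ?_⟩
  simp only [corner, lt_irrefl, if_false] at hbetween
  have hsign := tdiv_two_pow_sign (m i) k
  have hsign' := tdiv_two_pow_sign (m i) (k + 1)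
  have hle : (dyadicLevel (k + 1) m i).natAbs ≤ (dyadicLevel k m i).natAbs := by
    simp only [dyadicLevel, natAbs_tdiv_two_pow]
    exact Nat.div_le_div_left (Nat.pow_le_pow_right two_pos k.le_succ) (by positivity)
  simp only [dyadicLevel] at hle hbetween ⊢
  omega

def crossingCenter (k : ℕ) (n : Fin d → ℤ) (i j : Fin d) : ℤ :=
  if j < i then 2 ^ (k + 1) * n j else if j = i then 0 else 2 ^ k * n j

def crossingRadius (k : ℕ) (n : Fin d → ℤ) (i j : Fin d) : ℕ :=
  2 ^ (k + 1) * if j = i then (n i).natAbs + 1 else 1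

def crossingBox (k : ℕ) (n : Fin d → ℤ) (i : Fin d) : Finset (Fin d → ℤ) :=
  Fintype.piFinset fun j =>
    Icc (crossingCenter k n i j - crossingRadius k n i j)
      (crossingCenter k n i j + crossingRadius k n i j)

lemma card_crossingBox (k : ℕ) (n : Fin d → ℤ) (i : Fin d) :
    #(crossingBox k n i) ≤ 2 ^ ((k + 3) * d) * ((n i).natAbs + 1) := by
  have hfactor : ∀ j, #(Icc (crossingCenter k n i j - crossingRadius k n i j)
      (crossingCenter k n i j + crossingRadius k n i j)) ≤
        2 ^ (k + 3) * if j = i then (n i).natAbs + 1 else 1 := by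
    intro j
    rw [Int.card_Icc, crossingRadius]
    have : 1 ≤ 2 ^ (k + 1) * if j = i then (n i).natAbs + 1 else 1 :=
      Nat.one_le_iff_ne_zero.2 (by positivity)
    rw [show 2 ^ (k + 3) = 4 * 2 ^ (k + 1) by ring, mul_assoc]
    omega
  calc #(crossingBox k n i) ≤ ∏ j, 2 ^ (k + 3) * (if j = i then (n i).natAbs + 1 else 1) := by
        rw [crossingBox, Fintype.card_piFinset]; exact Finset.prod_le_prod' fun j _ => hfactor j
    _ = 2 ^ ((k + 3) * d) * ((n i).natAbs + 1) := by
        rw [Finset.prod_mul_distrib, Finset.prod_const, Finset.card_univ, Fintype.card_fin,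
          ← pow_mul, Finset.prod_ite_eq' univ i, if_pos (mem_univ i)]

lemma mem_crossingBox_of_staircase_ne_zero {k : ℕ} {m n : Fin d → ℤ} {i : Fin d}
    (h : staircase (dyadicLevel k m) (dyadicLevel (k + 1) m) n i ≠ 0) :
    m ∈ crossingBox k n i := by
  obtain ⟨hlt, hgt, hle, -, -⟩ := staircase_dyadicLevel_ne_zero h
  simp only [crossingBox, Fintype.mem_piFinset, Finset.mem_Icc, crossingCenter, crossingRadius]
  intro j
  rcases lt_trichotomy j i with hj | rfl | hj
  · have := natAbs_sub_two_pow_mul_tdiv_lt (m j) (k + 1)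
    simp only [if_pos hj, if_neg hj.ne, hlt j hj, dyadicLevel]
    omega
  · have := natAbs_lt_two_pow_mul_succ (m j) (k + 1)
    simp only [lt_irrefl, if_false, if_true, dyadicLevel] at hle ⊢
    have : (m j).natAbs ≤ 2 ^ (k + 1) * ((n j).natAbs + 1) :=
      this.le.trans (Nat.mul_le_mul_left _ (by omega))
    omega
  · have := natAbs_sub_two_pow_mul_tdiv_lt (m j) k
    have hk : 2 ^ k ≤ 2 ^ (k + 1) := Nat.pow_le_pow_right two_pos k.le_succ
    simp only [if_neg (not_lt.2 hj.le), if_neg hj.ne', hgt j hj, dyadicLevel]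
    omega

lemma natAbs_crossingCenter_add_crossingRadius_le (k : ℕ) (n : Fin d → ℤ) (i j : Fin d) :
    (crossingCenter k n i j).natAbs + crossingRadius k n i j ≤
      2 ^ (k + 1) * ((n j).natAbs + 1) := by
  have hk : 2 ^ k ≤ 2 ^ (k + 1) := Nat.pow_le_pow_right two_pos k.le_succ
  simp only [crossingCenter, crossingRadius]
  split_ifs with h1 h2 h2
  · exact absurd h1 (h2 ▸ lt_irrefl j)
  · simp [Int.natAbs_mul, Int.natAbs_pow, mul_add]
  · simp [h2]
  · simp only [Int.natAbs_mul, Int.natAbs_pow, mul_one, mul_add]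
    exact Nat.add_le_add_right (Nat.mul_le_mul_right _ hk) _

lemma natAbs_le_of_mem_crossingBox {k : ℕ} {m n : Fin d → ℤ} {i : Fin d}
    (hm : m ∈ crossingBox k n i) (j : Fin d) :
    (m j).natAbs ≤ 2 ^ (k + 1) * ((n j).natAbs + 1) := by
  have hj := Finset.mem_Icc.1 (Fintype.mem_piFinset.1 hm j)
  refine le_trans ?_ (natAbs_crossingCenter_add_crossingRadius_le k n i j)
  omega

lemma two_pow_le_natAbs_of_staircase_ne_zero {k : ℕ} {m n : Fin d → ℤ} {i : Fin d}
    (h : staircase (dyadicLevel k m) (dyadicLevel (k + 1) m) n i ≠ 0) :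
    2 ^ k ≤ (m i).natAbs := by
  obtain ⟨-, -, -, -, hne⟩ := staircase_dyadicLevel_ne_zero h
  exact (Nat.le_mul_of_pos_right _ (Int.natAbs_pos.2 hne)).trans (two_pow_mul_natAbs_tdiv_le _ k)

lemma two_pow_mul_natAbs_le_of_staircase_ne_zero {k : ℕ} {m n : Fin d → ℤ} {i : Fin d}
    (h : staircase (dyadicLevel k m) (dyadicLevel (k + 1) m) n i ≠ 0) (j : Fin d) :
    2 ^ k * (n j).natAbs ≤ (m j).natAbs := by
  obtain ⟨hlt, hgt, -, hle, -⟩ := staircase_dyadicLevel_ne_zero h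
  rcases lt_trichotomy j i with hj | rfl | hj
  · rw [hlt j hj]
    refine le_trans ?_ (two_pow_mul_natAbs_tdiv_le (m j) (k + 1))
    exact Nat.mul_le_mul_right _ (Nat.pow_le_pow_right two_pos k.le_succ)
  · exact (Nat.mul_le_mul_left _ hle).trans (two_pow_mul_natAbs_tdiv_le (m j) k)
  · rw [hgt j hj]; exact two_pow_mul_natAbs_tdiv_le (m j) k

lemma natCast_natAbs_eq_norm (x : ℤ) : ((x.natAbs : ℕ) : ℝ) = ‖x‖ := by
  rw [Nat.cast_natAbs, Int.cast_abs, Int.norm_eq_abs]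

lemma norm_comparable_of_staircase_ne_zero {k : ℕ} {m n : Fin d → ℤ} {i : Fin d}
    (h : staircase (dyadicLevel k m) (dyadicLevel (k + 1) m) n i ≠ 0) :
    2 ^ k * (‖n‖ + 2) ≤ 3 * (‖m‖ + 2) ∧ ‖m‖ + 2 ≤ 3 * (2 ^ k * (‖n‖ + 2)) := by
  have hk : (1 : ℝ) ≤ 2 ^ k := one_le_pow₀ one_le_two
  have hlow : (2 : ℝ) ^ k ≤ ‖m‖ := by
    refine le_trans ?_ ((natCast_natAbs_eq_norm (m i)).trans_le (norm_le_pi_norm m i))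
    exact_mod_cast two_pow_le_natAbs_of_staircase_ne_zero h
  have hscale : 2 ^ k * ‖n‖ ≤ ‖m‖ := by
    rw [← le_div_iff₀' (by positivity), pi_norm_le_iff_of_nonneg (by positivity)]
    intro j
    rw [le_div_iff₀' (by positivity), ← natCast_natAbs_eq_norm]
    refine le_trans ?_ ((natCast_natAbs_eq_norm (m j)).trans_le (norm_le_pi_norm m j))
    exact_mod_cast two_pow_mul_natAbs_le_of_staircase_ne_zero h j
  have hup : ‖m‖ ≤ 2 * 2 ^ k * (‖n‖ + 1) := by
    rw [pi_norm_le_iff_of_nonneg (by positivity)]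
    intro j
    rw [← natCast_natAbs_eq_norm]
    have := natAbs_le_of_mem_crossingBox (mem_crossingBox_of_staircase_ne_zero h) j
    have hcast : ((m j).natAbs : ℝ) ≤ 2 * 2 ^ k * ((n j).natAbs + 1) := by
      rw [pow_succ] at this; exact_mod_cast this.trans_eq (by ring)
    refine hcast.trans (mul_le_mul_of_nonneg_left ?_ (by positivity))
    rw [natCast_natAbs_eq_norm]
    linarith [norm_le_pi_norm n j]
  have hn : 0 ≤ 2 ^ k * ‖n‖ := by positivity
  constructor <;> nlinarith

lemma logWeight_le_of_staircase_ne_zero {k : ℕ} {m n : Fin d → ℤ} {i : Fin d} (q α : ℝ)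
    (h : staircase (dyadicLevel k m) (dyadicLevel (k + 1) m) n i ≠ 0) :
    logWeight (-q) α (‖m‖ + 2) ≤ 3 ^ |q| * (1 + Real.logb 2 3) ^ |α| *
      (((2 : ℝ) ^ (-q)) ^ k * ((k : ℝ) + 1) ^ |α| * logWeight (-q) α (‖n‖ + 2)) := by
  obtain ⟨hlow, hup⟩ := norm_comparable_of_staircase_ne_zero h
  have hn : 2 ≤ ‖n‖ + 2 := by linarith [norm_nonneg n]
  have hkn : 2 ≤ 2 ^ k * (‖n‖ + 2) :=
    hn.trans (le_mul_of_one_le_left (by linarith) (one_le_pow₀ one_le_two))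
  have hlog3 : 0 ≤ Real.logb 2 3 := Real.logb_nonneg one_lt_two (by norm_num)
  have := logWeight_le_of_le_mul (-q) α (by linarith [norm_nonneg m]) hkn (by norm_num) hup hlow
  rw [abs_neg] at this
  exact this.trans
    (mul_le_mul_of_nonneg_left (logWeight_two_pow_mul_le (-q) α hn k) (by positivity))

lemma sum_abs_staircase_mul_logWeight_le (q α : ℝ) (T : Finset (Fin d → ℤ)) (k : ℕ)
    (n : Fin d → ℤ) (i : Fin d) :
    ∑ m ∈ T, |(staircase (dyadicLevel k m) (dyadicLevel (k + 1) m) n i : ℝ)| *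
        logWeight (-q) α (‖m‖ + 2) ≤
      8 ^ d * (3 ^ |q| * (1 + Real.logb 2 3) ^ |α|) *
        (((k : ℝ) + 1) ^ |α| * (2 ^ d * (2 : ℝ) ^ (-q)) ^ k) *
          logWeight (-q + 1) α (‖n‖ + 2) := by
  have hlog3 : 0 ≤ Real.logb 2 3 := Real.logb_nonneg one_lt_two (by norm_num)
  set B := 3 ^ |q| * (1 + Real.logb 2 3) ^ |α| *
    (((2 : ℝ) ^ (-q)) ^ k * ((k : ℝ) + 1) ^ |α| * logWeight (-q) α (‖n‖ + 2))
  have hB : 0 ≤ B := by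
    have := logWeight_pos (-q) α (by linarith [norm_nonneg n] : 1 < ‖n‖ + 2)
    positivity
  have hterm : ∀ m, |(staircase (dyadicLevel k m) (dyadicLevel (k + 1) m) n i : ℝ)| *
      logWeight (-q) α (‖m‖ + 2) ≤ if m ∈ crossingBox k n i then B else 0 := by
    intro m
    by_cases h : staircase (dyadicLevel k m) (dyadicLevel (k + 1) m) n i = 0
    · simp only [h, Int.cast_zero, abs_zero, zero_mul]; split_ifs <;> simp [hB]
    rw [if_pos (mem_crossingBox_of_staircase_ne_zero h)]
    exact (mul_le_of_le_one_left (logWeight_pos _ _ (by linarith [norm_nonneg m])).le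
      (abs_staircase_apply_le_one _ _ n i)).trans (logWeight_le_of_staircase_ne_zero q α h)
  have hcard : (#(crossingBox k n i) : ℝ) ≤ 2 ^ ((k + 3) * d) * (‖n‖ + 2) := by
    have hni : ((n i).natAbs : ℝ) + 1 ≤ ‖n‖ + 2 := by
      rw [natCast_natAbs_eq_norm]; linarith [norm_le_pi_norm n i]
    calc (#(crossingBox k n i) : ℝ) ≤ 2 ^ ((k + 3) * d) * ((n i).natAbs + 1) := by
          exact_mod_cast card_crossingBox k n i
      _ ≤ _ := by gcongr
  calc _ ≤ ∑ m ∈ T, if m ∈ crossingBox k n i then B else 0 :=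
        Finset.sum_le_sum fun m _ => hterm m
    _ = #(T ∩ crossingBox k n i) * B := by
        rw [Finset.sum_ite_mem, Finset.sum_const, nsmul_eq_mul]
    _ ≤ 2 ^ ((k + 3) * d) * (‖n‖ + 2) * B := by
        gcongr
        exact (Nat.cast_le.2 (Finset.card_le_card Finset.inter_subset_right)).trans hcard
    _ = _ := by
        rw [logWeight_add_one _ _ (by positivity), pow_mul, pow_add, mul_pow, mul_pow]
        ring

lemma sum_abs_dyadicFlow_mul_logWeight_le (q α : ℝ) (T : Finset (Fin d → ℤ))
    (n : Fin d → ℤ) (i : Fin d) :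
    ∑ m ∈ T, |(dyadicFlow m n i : ℝ)| * logWeight (-q) α (‖m‖ + 2) ≤
      8 ^ d * (3 ^ |q| * (1 + Real.logb 2 3) ^ |α|) *
        (∑ k ∈ range (T.sup depth), ((k : ℝ) + 1) ^ |α| * (2 ^ d * (2 : ℝ) ^ (-q)) ^ k) *
          logWeight (-q + 1) α (‖n‖ + 2) := by
  calc _ ≤ ∑ m ∈ T, ∑ k ∈ range (T.sup depth),
        |(staircase (dyadicLevel k m) (dyadicLevel (k + 1) m) n i : ℝ)| *
          logWeight (-q) α (‖m‖ + 2) := by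
        refine Finset.sum_le_sum fun m hm => ?_
        rw [← Finset.sum_mul]
        exact mul_le_mul_of_nonneg_right (abs_dyadicFlow_le m n i (Finset.le_sup hm))
          (logWeight_pos _ _ (by linarith [norm_nonneg m])).le
    _ = ∑ k ∈ range (T.sup depth), ∑ m ∈ T,
        |(staircase (dyadicLevel k m) (dyadicLevel (k + 1) m) n i : ℝ)| *
          logWeight (-q) α (‖m‖ + 2) := Finset.sum_comm
    _ ≤ _ := by
        rw [Finset.mul_sum, Finset.sum_mul]
        exact Finset.sum_le_sum fun k _ => sum_abs_staircase_mul_logWeight_le q α T k n i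

theorem exists_tsum_abs_dyadicFlow_mul_logWeight_le (α : ℝ) {q : ℝ} (hq : (d : ℝ) < q) :
    ∃ C, 0 ≤ C ∧ ∀ (n : Fin d → ℤ) (i : Fin d),
      Summable (fun m => |(dyadicFlow m n i : ℝ)| * logWeight (-q) α (‖m‖ + 2)) ∧
      ∑' m, |(dyadicFlow m n i : ℝ)| * logWeight (-q) α (‖m‖ + 2) ≤
        C * logWeight (-q + 1) α (‖n‖ + 2) := by
  set r : ℝ := 2 ^ d * 2 ^ (-q)
  have hr1 : r < 1 := by
    rw [show r = 2 ^ ((d : ℝ) + -q) by rw [Real.rpow_add two_pos, Real.rpow_natCast]]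
    exact Real.rpow_lt_one_of_one_lt_of_neg one_lt_two (by linarith)
  have hgeom := summable_rpow_mul_geometric |α| (by positivity : 0 < r) hr1
  have hlog3 : 0 ≤ Real.logb 2 3 := Real.logb_nonneg one_lt_two (by norm_num)
  set c := 8 ^ d * (3 ^ |q| * (1 + Real.logb 2 3) ^ |α|)
  refine ⟨c * ∑' k : ℕ, ((k : ℝ) + 1) ^ |α| * r ^ k, by positivity, fun n i => ?_⟩
  have hnonneg : 0 ≤ fun m : Fin d → ℤ =>
      |(dyadicFlow m n i : ℝ)| * logWeight (-q) α (‖m‖ + 2) :=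
    fun m => mul_nonneg (abs_nonneg _) (logWeight_pos _ _ (by linarith [norm_nonneg m])).le
  have hpartial : ∀ T : Finset (Fin d → ℤ),
      ∑ m ∈ T, |(dyadicFlow m n i : ℝ)| * logWeight (-q) α (‖m‖ + 2) ≤
        c * (∑' k : ℕ, ((k : ℝ) + 1) ^ |α| * r ^ k) * logWeight (-q + 1) α (‖n‖ + 2) := by
    intro T
    have := logWeight_pos (-q + 1) α (by linarith [norm_nonneg n] : 1 < ‖n‖ + 2)
    refine (sum_abs_dyadicFlow_mul_logWeight_le q α T n i).trans ?_
    gcongr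
    exact hgeom.sum_le_tsum _ fun k _ => by positivity
  exact ⟨summable_of_sum_le hnonneg hpartial, Real.tsum_le_of_sum_le hnonneg hpartial⟩

lemma latticeDiv_cast_apply (F : (Fin d → ℤ) → Fin d → ℤ) (n : Fin d → ℤ) :
    (latticeDiv F n : ℝ) = ∑ i, ((F (n - Pi.single i 1) i : ℝ) - F n i) := by
  push_cast [latticeDiv_apply]; rfl

lemma hasSum_latticeDiv_dyadicFlow_smul {E : Type*} [AddCommGroup E] [Module ℝ E]
    [TopologicalSpace E] [IsTopologicalAddGroup E] [ContinuousConstSMul ℝ E]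
    {φ : (Fin d → ℤ) → E} (hφ : HasSum φ 0) (n : Fin d → ℤ) :
    HasSum (fun m => (latticeDiv (dyadicFlow m) n : ℝ) • φ m) (φ n) := by
  have := (hasSum_ite_eq n (φ n)).sub (hφ.const_smul (if n = 0 then (1 : ℝ) else 0))
  rw [smul_zero, sub_zero] at this
  refine this.congr_fun fun m => ?_
  rw [latticeDiv_dyadicFlow]
  rcases eq_or_ne m n with rfl | h
  · by_cases h0 : m = 0 <;> simp [h0]
  · simp [h, Ne.symm h]

theorem exists_divergence_form_of_le_logWeight {E : Type*} [NormedAddCommGroup E]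
    [NormedSpace ℝ E] [CompleteSpace E] (α : ℝ) {q : ℝ} (hq : (d : ℝ) < q) :
    ∃ C, 0 ≤ C ∧ ∀ (Cf : ℝ) (φ : (Fin d → ℤ) → E),
      (∀ m, ‖φ m‖ ≤ Cf * logWeight (-q) α (‖m‖ + 2)) → HasSum φ 0 →
      ∃ g : (Fin d → ℤ) → Fin d → E,
        (∀ n, φ n = ∑ i, (g (n - Pi.single i 1) i - g n i)) ∧
        ∀ n i, ‖g n i‖ ≤ C * Cf * logWeight (-q + 1) α (‖n‖ + 2) := by
  obtain ⟨C, hC, hflow⟩ := exists_tsum_abs_dyadicFlow_mul_logWeight_le α hq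
  refine ⟨C, hC, fun Cf φ hφ hsum => ?_⟩
  have hCf : 0 ≤ Cf := nonneg_of_mul_nonneg_left ((norm_nonneg _).trans (hφ 0))
    (logWeight_pos _ _ (by norm_num))
  have hnorm : ∀ n i m, ‖(dyadicFlow m n i : ℝ) • φ m‖ ≤
      Cf * (|(dyadicFlow m n i : ℝ)| * logWeight (-q) α (‖m‖ + 2)) := fun n i m => by
    rw [norm_smul, Real.norm_eq_abs, mul_left_comm]
    exact mul_le_mul_of_nonneg_left (hφ m) (abs_nonneg _)
  have hsummable : ∀ n i, Summable fun m => (dyadicFlow m n i : ℝ) • φ m :=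
    fun n i => .of_norm_bounded (((hflow n i).1).mul_left Cf) (hnorm n i)
  refine ⟨fun n i => ∑' m, (dyadicFlow m n i : ℝ) • φ m, fun n => ?_, fun n i => ?_⟩
  · refine (hasSum_latticeDiv_dyadicFlow_smul hsum n).unique ?_
    simp only [latticeDiv_cast_apply, sub_smul, Finset.sum_smul]
    exact hasSum_sum fun i _ => (hsummable _ i).hasSum.sub (hsummable n i).hasSum
  · calc ‖∑' m, (dyadicFlow m n i : ℝ) • φ m‖
        ≤ ∑' m, Cf * (|(dyadicFlow m n i : ℝ)| * logWeight (-q) α (‖m‖ + 2)) :=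
          tsum_of_norm_bounded (((hflow n i).1).mul_left Cf).hasSum (hnorm n i)
      _ ≤ C * Cf * logWeight (-q + 1) α (‖n‖ + 2) := by
          rw [tsum_mul_left, mul_comm C, mul_assoc]
          exact mul_le_mul_of_nonneg_left (hflow n i).2 hCf

end DyadicFlowBound

section LatticeCoordinates

open Finset

variable {d : ℕ}

lemma enorm_nonneg {n : ℕ} (v : Vec n) : 0 ≤ enorm v := Real.sqrt_nonneg _

lemma norm_le_enorm {n : ℕ} (v : Vec n) : ‖v‖ ≤ enorm v :=
  (pi_norm_le_iff_of_nonneg (enorm_nonneg v)).2 fun i => Real.abs_le_sqrt <|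
    Finset.single_le_sum (f := fun j => v j ^ 2) (fun _ _ => sq_nonneg _) (mem_univ i)

lemma sqrt_sum_sq_le_sqrt_card_mul {n : ℕ} (x : Fin n → ℝ) {B : ℝ} (hB : 0 ≤ B)
    (h : ∀ i, |x i| ≤ B) : √(∑ i, x i ^ 2) ≤ √n * B := by
  rw [← Real.sqrt_sq hB, ← Real.sqrt_mul n.cast_nonneg]
  refine Real.sqrt_le_sqrt ?_
  calc ∑ i, x i ^ 2 ≤ ∑ _i : Fin n, B ^ 2 :=
        Finset.sum_le_sum fun i _ => sq_le_sq' (abs_le.1 (h i)).1 (abs_le.1 (h i)).2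
    _ = n * B ^ 2 := by simp

lemma enorm_le_sqrt_mul_norm {n : ℕ} (v : Vec n) : enorm v ≤ √n * ‖v‖ :=
  sqrt_sum_sq_le_sqrt_card_mul v (norm_nonneg v) fun i =>
    (Real.norm_eq_abs (v i)).symm.trans_le (norm_le_pi_norm v i)

lemma norm_intCast_comp (u : Fin d → ℤ) : ‖fun i => (u i : ℝ)‖ = ‖u‖ := by
  refine le_antisymm ((pi_norm_le_iff_of_nonneg (norm_nonneg u)).2 fun i => ?_)
    ((pi_norm_le_iff_of_nonneg (norm_nonneg _)).2 fun i => ?_)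
  · rw [Int.norm_cast_real]; exact norm_le_pi_norm u i
  · rw [← Int.norm_cast_real]; exact norm_le_pi_norm (fun i => (u i : ℝ)) i

def intCombination (s : Fin d → Vec d) (u : Fin d → ℤ) : Vec d := ∑ i, (u i : ℝ) • s i

lemma intCombination_sub_single (s : Fin d → Vec d) (u : Fin d → ℤ) (i : Fin d) :
    intCombination s (u - Pi.single i 1) = intCombination s u - s i := by
  simp [intCombination, sub_smul, Finset.sum_sub_distrib, Pi.single_apply]

lemma intCombination_injective {s : Fin d → Vec d} (hs : LinearIndependent ℝ s) :
    Function.Injective (intCombination s) := fun u v huv =>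
  funext fun i => Int.cast_injective <| congrFun (hs.fintypeLinearCombination_injective
    (by simpa [Fintype.linearCombination_apply, intCombination] using huv)) i

lemma exists_ang_intCombination_comparable {s : Fin d → Vec d} (hs : LinearIndependent ℝ s) :
    ∃ K, 1 ≤ K ∧ ∀ u : Fin d → ℤ,
      ang (intCombination s u) ≤ K * (‖u‖ + 2) ∧ ‖u‖ + 2 ≤ K * ang (intCombination s u) := by
  set L := Fintype.linearCombination ℝ s
  obtain ⟨K₀, -, hK₀⟩ := L.exists_antilipschitzWith
    (LinearMap.ker_eq_bot.2 hs.fintypeLinearCombination_injective)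
  set K₁ := √d * ‖LinearMap.toContinuousLinearMap L‖
  have hL : ∀ u : Fin d → ℤ, L (fun i => (u i : ℝ)) = intCombination s u := fun u => by
    simp [L, Fintype.linearCombination_apply, intCombination]
  set K := max (max (K₀ : ℝ) K₁) 1
  have hK₀K : (K₀ : ℝ) ≤ K := (le_max_left _ _).trans (le_max_left _ _)
  have hK₁K : K₁ ≤ K := (le_max_right _ _).trans (le_max_left _ _)
  have hK : 1 ≤ K := le_max_right _ _
  refine ⟨K, hK, fun u => ⟨?_, ?_⟩⟩
  · have hup : enorm (intCombination s u) ≤ K₁ * ‖u‖ := by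
      rw [← hL, ← norm_intCast_comp, mul_assoc]
      exact (enorm_le_sqrt_mul_norm _).trans (mul_le_mul_of_nonneg_left
        ((LinearMap.toContinuousLinearMap L).le_opNorm _) (Real.sqrt_nonneg _))
    have := mul_le_mul_of_nonneg_right hK₁K (norm_nonneg u)
    rw [ang]; nlinarith
  · have hlow : ‖u‖ ≤ K₀ * enorm (intCombination s u) := by
      rw [← norm_intCast_comp, ← hL]
      exact (hK₀.le_mul_norm (map_zero L) _).trans
        (mul_le_mul_of_nonneg_left (norm_le_enorm _) K₀.2)
    have := mul_le_mul_of_nonneg_right hK₀K (enorm_nonneg (intCombination s u))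
    rw [ang]; nlinarith

lemma exists_logWeight_ang_intCombination_comparable {s : Fin d → Vec d}
    (hs : LinearIndependent ℝ s) (p α : ℝ) : ∃ c, 0 ≤ c ∧ ∀ u : Fin d → ℤ,
      logWeight p α (ang (intCombination s u)) ≤ c * logWeight p α (‖u‖ + 2) ∧
      logWeight p α (‖u‖ + 2) ≤ c * logWeight p α (ang (intCombination s u)) := by
  obtain ⟨K, hK, hcomp⟩ := exists_ang_intCombination_comparable hs
  have hlogK : 0 ≤ Real.logb 2 K := Real.logb_nonneg one_lt_two hK
  have hang : ∀ u, 2 ≤ ang (intCombination s u) := fun u => by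
    rw [ang]; linarith [enorm_nonneg (intCombination s u)]
  have hwt : ∀ u : Fin d → ℤ, 2 ≤ ‖u‖ + 2 := fun u => by linarith [norm_nonneg u]
  exact ⟨K ^ |p| * (1 + Real.logb 2 K) ^ |α|, by positivity, fun u =>
    ⟨logWeight_le_of_le_mul p α (hang u) (hwt u) hK (hcomp u).1 (hcomp u).2,
      logWeight_le_of_le_mul p α (hwt u) (hang u) hK (hcomp u).2 (hcomp u).1⟩⟩

theorem exists_divergence_form_intCombination {N : ℕ} {s : Fin d → Vec d}
    (hs : LinearIndependent ℝ s) (α : ℝ) {q : ℝ} (hq : (d : ℝ) < q) :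
    ∃ C, ∀ (Cf : ℝ) (f : Vec d → Vec N),
      (∀ u, enorm (f (intCombination s u)) ≤
        Cf * logWeight (-q) α (ang (intCombination s u))) →
      HasSum (fun u => f (intCombination s u)) 0 →
      ∃ g : Vec d → Fin d → Vec N,
        (∀ u, f (intCombination s u) =
          ∑ i, (g (intCombination s u - s i) i - g (intCombination s u) i)) ∧
        ∀ u, √(∑ i, enorm (g (intCombination s u) i) ^ 2) ≤
          C * Cf * logWeight (-q + 1) α (ang (intCombination s u)) := by
  obtain ⟨c₁, hc₁, hcomp₁⟩ := exists_logWeight_ang_intCombination_comparable hs (-q) α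
  obtain ⟨c₂, hc₂, hcomp₂⟩ := exists_logWeight_ang_intCombination_comparable hs (-q + 1) α
  obtain ⟨C, hC, hcore⟩ := exists_divergence_form_of_le_logWeight (E := Vec N) α hq
  refine ⟨√d * √N * C * c₁ * c₂, fun Cf f hf hsum => ?_⟩
  have hCf : 0 ≤ Cf := nonneg_of_mul_nonneg_left ((enorm_nonneg _).trans (hf 0))
    (logWeight_pos _ _ (by rw [ang]; linarith [enorm_nonneg (intCombination s 0)]))
  have hφ : ∀ u, ‖f (intCombination s u)‖ ≤ c₁ * Cf * logWeight (-q) α (‖u‖ + 2) := fun u =>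
    calc ‖f (intCombination s u)‖ ≤ Cf * logWeight (-q) α (ang (intCombination s u)) :=
          (norm_le_enorm _).trans (hf u)
      _ ≤ Cf * (c₁ * logWeight (-q) α (‖u‖ + 2)) :=
          mul_le_mul_of_nonneg_left (hcomp₁ u).1 hCf
      _ = _ := by ring
  obtain ⟨g, hdiv, hg⟩ := hcore (c₁ * Cf) (fun u => f (intCombination s u)) hφ hsum
  have hinj := intCombination_injective hs
  refine ⟨Function.extend (intCombination s) g 0, fun u => ?_, fun u => ?_⟩
  · simp only [← intCombination_sub_single, hinj.extend_apply]
    exact hdiv u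
  · have := logWeight_pos (-q + 1) α (by linarith [norm_nonneg u] : 1 < ‖u‖ + 2)
    simp only [hinj.extend_apply]
    refine (sqrt_sum_sq_le_sqrt_card_mul _
      (B := √N * (C * (c₁ * Cf) * logWeight (-q + 1) α (‖u‖ + 2))) (by positivity)
        fun i => ?_).trans ?_
    · rw [abs_of_nonneg (enorm_nonneg _)]
      exact (enorm_le_sqrt_mul_norm _).trans
        (mul_le_mul_of_nonneg_left (hg u i) (Real.sqrt_nonneg _))
    · calc √d * (√N * (C * (c₁ * Cf) * logWeight (-q + 1) α (‖u‖ + 2)))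
          ≤ √d * (√N * (C * (c₁ * Cf) *
              (c₂ * logWeight (-q + 1) α (ang (intCombination s u))))) := by
            gcongr; exact (hcomp₂ u).2
        _ = _ := by ring

lemma latticePt_injective {A : Matrix (Fin d) (Fin d) ℝ} (hA : IsUnit A.det) :
    Function.Injective (latticePt d A) := fun _ _ h =>
  funext fun j => Int.cast_injective (α := ℝ) <| congrFun
    (Matrix.mulVec_injective_iff_isUnit.2 ((Matrix.isUnit_iff_isUnit_det A).2 hA) h) j

lemma latticePt_sum_smul (A : Matrix (Fin d) (Fin d) ℝ) (u : Fin d → ℤ)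
    (ζ : Fin d → Fin d → ℤ) :
    latticePt d A (∑ i, u i • ζ i) = ∑ i, (u i : ℝ) • latticePt d A (ζ i) := by
  ext a
  simp only [latticePt, Finset.sum_apply, Pi.smul_apply, smul_eq_mul, Int.cast_sum, Int.cast_mul,
    Finset.mul_sum]
  rw [Finset.sum_comm]
  exact Finset.sum_congr rfl fun i _ => Finset.sum_congr rfl fun j _ => by ring

lemma exists_equiv_latticePt_eq_intCombination {A : Matrix (Fin d) (Fin d) ℝ}
    (hA : IsUnit A.det) {s : Fin d → Vec d} (hslat : ∀ i, s i ∈ Lattice d A)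
    (hsind : LinearIndependent ℝ s)
    (hsspan : ∀ x ∈ Lattice d A, ∃ z : Fin d → ℤ, x = ∑ i, (z i : ℝ) • s i) :
    ∃ e : (Fin d → ℤ) ≃ (Fin d → ℤ), ∀ z, latticePt d A z = intCombination s (e z) := by
  choose τ hτ using fun z => hsspan (latticePt d A z) ⟨z, rfl⟩
  choose ζ hζ using hslat
  refine ⟨Equiv.ofBijective τ ⟨fun z z' h => latticePt_injective hA ?_,
    fun u => ⟨∑ i, u i • ζ i, ?_⟩⟩, hτ⟩
  · rw [hτ z, hτ z', h]
  · refine intCombination_injective hsind ((hτ _).symm.trans ?_)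
    rw [latticePt_sum_smul]
    simp only [hζ, intCombination]

end LatticeCoordinates

theorem conversion_to_divergence_form_general
    (d N : ℕ)
    (A : Matrix (Fin d) (Fin d) ℝ) (hA : IsUnit A.det)
    (s : Fin d → Vec d) (hslat : ∀ i, s i ∈ Lattice d A)
    (hsind : LinearIndependent ℝ s)
    (hsspan : ∀ x ∈ Lattice d A, ∃ z : Fin d → ℤ, x = ∑ i, (z i : ℝ) • s i)
    (α : ℝ) (q : ℝ) (hq : (d : ℝ) < q) :
    ∃ C : ℝ, ∀ (Cf : ℝ) (f : Vec d → Vec N),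
      (∀ z : Fin d → ℤ,
        enorm (f (latticePt d A z)) ≤
          Cf * ang (latticePt d A z) ^ (-q) * Real.log (ang (latticePt d A z)) ^ α) →
      HasSum (fun z : Fin d → ℤ => f (latticePt d A z)) 0 →
      ∃ g : Vec d → Fin d → Vec N,
        (∀ z : Fin d → ℤ,
          f (latticePt d A z) =
            ∑ i : Fin d, (g (latticePt d A z - s i) i - g (latticePt d A z) i)) ∧
        (∀ z : Fin d → ℤ,
          Real.sqrt (∑ i : Fin d, (enorm (g (latticePt d A z) i)) ^ 2) ≤
            C * Cf * ang (latticePt d A z) ^ (-q + 1) *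
              Real.log (ang (latticePt d A z)) ^ α) := by
  obtain ⟨e, he⟩ := exists_equiv_latticePt_eq_intCombination hA hslat hsind hsspan
  obtain ⟨C, hC⟩ := exists_divergence_form_intCombination (N := N) hsind α hq
  refine ⟨C, fun Cf f hf hsum => ?_⟩
  have hf' : ∀ u, enorm (f (intCombination s u)) ≤
      Cf * logWeight (-q) α (ang (intCombination s u)) := fun u => by
    simpa only [he, e.apply_symm_apply, logWeight, mul_assoc] using hf (e.symm u)
  have hsum' : HasSum (fun u => f (intCombination s u)) 0 :=
    e.hasSum_iff.1 (by simpa only [he, Function.comp_def] using hsum)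
  obtain ⟨g, hdiv, hg⟩ := hC Cf f hf' hsum'
  refine ⟨g, fun z => he z ▸ hdiv (e z), fun z => ?_⟩
  simpa only [← he, logWeight, mul_assoc] using hg (e z)

/-- Lemma: conversion to divergence form. -/
theorem conversion_to_divergence_form
    (d N : ℕ) (hd : 2 ≤ d)
    (A : Matrix (Fin d) (Fin d) ℝ) (hA : IsUnit A.det)
    (s : Fin d → Vec d) (hslat : ∀ i, s i ∈ Lattice d A)
    (hsind : LinearIndependent ℝ s)
    (hsspan : ∀ x ∈ Lattice d A, ∃ z : Fin d → ℤ, x = ∑ i, (z i : ℝ) • s i)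
    (α : ℝ) (q : ℝ) (hq : (d : ℝ) < q) :
    ∃ C : ℝ, ∀ (Cf : ℝ) (f : Vec d → Vec N),
      (∀ z : Fin d → ℤ,
        enorm (f (latticePt d A z)) ≤
          Cf * ang (latticePt d A z) ^ (-q) * Real.log (ang (latticePt d A z)) ^ α) →
      HasSum (fun z : Fin d → ℤ => f (latticePt d A z)) 0 →
      ∃ g : Vec d → Fin d → Vec N,
        (∀ z : Fin d → ℤ,
          f (latticePt d A z) =
            ∑ i : Fin d, (g (latticePt d A z - s i) i - g (latticePt d A z) i)) ∧
        (∀ z : Fin d → ℤ,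
          Real.sqrt (∑ i : Fin d, (enorm (g (latticePt d A z) i)) ^ 2) ≤
            C * Cf * ang (latticePt d A z) ^ (-q + 1) *
              Real.log (ang (latticePt d A z)) ^ α) :=
  conversion_to_divergence_form_general d N A hA s hslat hsind hsspan α q hq

end Defect
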